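/- Let q, n ≥ 1, H ∈ ℝ^{q×n}, h ∈ ℝ^q with h_j > 0 for every j, suppose P(H,h) is bounded, and define V(e) := max_{1 ≤ j ≤ q} (H·e)_j / h_j. Let M : ℕ → ℝ^{n×n} and λ : ℕ → ℝ with 0 < λ(t) < 1 for all t, and suppose for every t there exists an entrywise nonnegative P(t) ∈ ℝ^{q×q} with P(t)·H = H·M(t) and P(t)·h ≤ λ(t)·h componentwise. Let λ̄ ∈ (0,1) satisfy λ(t) ≤ λ̄ for all t. Let w : ℕ → ℝⁿ and c ≥ 0 satisfy V(w(t)) ≤ c for all t. If e : ℕ → ℝⁿ satisfies e(t+1) = M(t)·e(t) + w(t) for all t, then for every t ∈ ℕ: V(e(t)) ≤ λ̄^t · V(e(0)) + c·(1 − λ̄^t)/(1 − λ̄); in particular V(e(t)) ≤ λ̄^t · V(e(0)) + c/(1 − λ̄), so the error converges exponentially fast to the bounded set {e : V(e) ≤ c/(1 − λ̄)}. -/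

import Mathlib

/-- The gauge `V(e) = max_j (H·e)_j / h_j` of the polyhedron `P(H,h)`. -/
noncomputable def polyGauge {q n : ℕ} (hq : 0 < q)
    (H : Matrix (Fin q) (Fin n) ℝ) (h : Fin q → ℝ) (e : Fin n → ℝ) : ℝ :=
  Finset.univ.sup' ⟨⟨0, hq⟩, Finset.mem_univ _⟩ fun j => H.mulVec e j / h j

open Matrix

/-!
The gauge `V` of `P(H,h)` satisfies `H e ≤ V(e) • h`. If `P ≥ 0`, `P H = H M` and
`P h ≤ λ h`, then `H (M e) = P (H e) ≤ V(e) • P h ≤ (λ V(e)) • h`, so `V(M e) ≤ λ V(e)`; this needs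
`V(e) ≥ 0`, which holds because `P(H,h)` is bounded and so contains no ray. With the
subadditivity of `V` this gives `V(e(t+1)) ≤ λ̄ V(e(t)) + c`, and unrolling this affine
recursion gives the geometric bound.
-/

theorem Matrix.mulVec_mono_of_nonneg {m k R : Type*} [Fintype k] [Semiring R]
    [PartialOrder R] [IsOrderedRing R] {P : Matrix m k R} (hP : ∀ i j, 0 ≤ P i j)
    {x y : k → R} (hxy : x ≤ y) : P *ᵥ x ≤ P *ᵥ y := fun i =>
  Finset.sum_le_sum fun j _ => mul_le_mul_of_nonneg_left (hxy j) (hP i j)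

theorem eq_zero_of_isBounded_of_forall_smul_mem {E : Type*} [NormedAddCommGroup E]
    [NormedSpace ℝ E] {S : Set E} (hS : Bornology.IsBounded S) {x : E}
    (hx : ∀ s : ℝ, 0 ≤ s → s • x ∈ S) : x = 0 := by
  obtain ⟨r, hr⟩ := isBounded_iff_forall_norm_le.mp hS
  by_contra hne
  have hpos : 0 < ‖x‖ := norm_pos_iff.mpr hne
  have hr0 : 0 ≤ r := (norm_nonneg _).trans (hr _ (hx 0 le_rfl))
  have := hr _ (hx ((r + 1) / ‖x‖) (by positivity))
  rw [norm_smul, Real.norm_of_nonneg (by positivity), div_mul_cancel₀ _ hpos.ne'] at this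
  linarith

section polyGauge

variable {q n : ℕ} (hq : 0 < q) {H : Matrix (Fin q) (Fin n) ℝ} {h : Fin q → ℝ}

theorem polyGauge_le_iff (hh : ∀ j, 0 < h j) {e : Fin n → ℝ} {a : ℝ} :
    polyGauge hq H h e ≤ a ↔ H *ᵥ e ≤ a • h := by
  refine (Finset.sup'_le_iff _ _).trans ?_
  exact ⟨fun hj j => (div_le_iff₀ (hh j)).mp (hj j (Finset.mem_univ j)),
    fun hj j _ => (div_le_iff₀ (hh j)).mpr (hj j)⟩

theorem mulVec_le_polyGauge_smul (hh : ∀ j, 0 < h j) (e : Fin n → ℝ) :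
    H *ᵥ e ≤ polyGauge hq H h e • h :=
  (polyGauge_le_iff hq hh).mp le_rfl

theorem polyGauge_nonneg (hh : ∀ j, 0 < h j)
    (hbdd : Bornology.IsBounded {e : Fin n → ℝ | ∀ j, (H *ᵥ e) j ≤ h j})
    (e : Fin n → ℝ) : 0 ≤ polyGauge hq H h e := by
  by_contra! hneg
  have hHe : ∀ j, (H *ᵥ e) j < 0 := fun j =>
    (mulVec_le_polyGauge_smul hq hh e j).trans_lt (mul_neg_of_neg_of_pos hneg (hh j))
  have hray : ∀ s : ℝ, 0 ≤ s → s • e ∈ {e : Fin n → ℝ | ∀ j, (H *ᵥ e) j ≤ h j} := by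
    intro s hs j
    rw [Matrix.mulVec_smul, Pi.smul_apply, smul_eq_mul]
    exact (mul_nonpos_of_nonneg_of_nonpos hs (hHe j).le).trans (hh j).le
  have he : e = 0 := eq_zero_of_isBounded_of_forall_smul_mem hbdd hray
  simpa [he] using hHe ⟨0, hq⟩

theorem polyGauge_add_le (hh : ∀ j, 0 < h j) (a b : Fin n → ℝ) :
    polyGauge hq H h (a + b) ≤ polyGauge hq H h a + polyGauge hq H h b := by
  rw [polyGauge_le_iff hq hh, Matrix.mulVec_add, add_smul]
  exact add_le_add (mulVec_le_polyGauge_smul hq hh a) (mulVec_le_polyGauge_smul hq hh b)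

theorem polyGauge_mulVec_le (hh : ∀ j, 0 < h j) {M : Matrix (Fin n) (Fin n) ℝ}
    {P : Matrix (Fin q) (Fin q) ℝ} {lam : ℝ} (hP : ∀ i j, 0 ≤ P i j) (hPH : P * H = H * M)
    (hPh : ∀ j, (P *ᵥ h) j ≤ lam * h j) {e : Fin n → ℝ} (he : 0 ≤ polyGauge hq H h e) :
    polyGauge hq H h (M *ᵥ e) ≤ lam * polyGauge hq H h e := by
  rw [polyGauge_le_iff hq hh]
  calc H *ᵥ (M *ᵥ e) = P *ᵥ (H *ᵥ e) := by
        rw [Matrix.mulVec_mulVec, Matrix.mulVec_mulVec, hPH]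
    _ ≤ P *ᵥ (polyGauge hq H h e • h) :=
        Matrix.mulVec_mono_of_nonneg hP (mulVec_le_polyGauge_smul hq hh e)
    _ = polyGauge hq H h e • P *ᵥ h := Matrix.mulVec_smul P _ h
    _ ≤ (lam * polyGauge hq H h e) • h := fun j => by
        simpa [mul_comm lam, mul_assoc] using mul_le_mul_of_nonneg_left (hPh j) he

end polyGauge

theorem le_pow_mul_add_of_le_mul_add {v : ℕ → ℝ} {a c : ℝ} (ha : 0 ≤ a) (ha1 : a ≠ 1)
    (hv : ∀ t, v (t + 1) ≤ a * v t + c) (t : ℕ) :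
    v t ≤ a ^ t * v 0 + c * (1 - a ^ t) / (1 - a) := by
  have h1a : 1 - a ≠ 0 := sub_ne_zero.mpr (Ne.symm ha1)
  induction t with
  | zero => simp
  | succ t ih =>
    calc v (t + 1) ≤ a * v t + c := hv t
      _ ≤ a * (a ^ t * v 0 + c * (1 - a ^ t) / (1 - a)) + c := by gcongr
      _ = a ^ (t + 1) * v 0 + c * (1 - a ^ (t + 1)) / (1 - a) := by
        field_simp
        ring

theorem stmt_7_general (q n : ℕ) (hq : 1 ≤ q)
    (H : Matrix (Fin q) (Fin n) ℝ) (h : Fin q → ℝ) (hh : ∀ j, 0 < h j)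
    (hbdd : Bornology.IsBounded {e : Fin n → ℝ | ∀ j, H.mulVec e j ≤ h j})
    (M : ℕ → Matrix (Fin n) (Fin n) ℝ) (lam : ℕ → ℝ)
    (hdual : ∀ t, ∃ P : Matrix (Fin q) (Fin q) ℝ,
      (∀ i j, 0 ≤ P i j) ∧ P * H = H * (M t) ∧ ∀ j, P.mulVec h j ≤ lam t * h j)
    (lambar : ℝ) (hlambar : 0 < lambar ∧ lambar < 1)
    (hle : ∀ t, lam t ≤ lambar)
    (w : ℕ → Fin n → ℝ) (c : ℝ) (hc : 0 ≤ c)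
    (hw : ∀ t, polyGauge hq H h (w t) ≤ c)
    (e : ℕ → Fin n → ℝ)
    (hdyn : ∀ t, e (t + 1) = (M t).mulVec (e t) + w t) :
    ∀ t : ℕ,
      polyGauge hq H h (e t) ≤
        lambar ^ t * polyGauge hq H h (e 0) + c * (1 - lambar ^ t) / (1 - lambar) ∧
      polyGauge hq H h (e t) ≤
        lambar ^ t * polyGauge hq H h (e 0) + c / (1 - lambar) := by
  have hV := polyGauge_nonneg hq hh hbdd
  have hstep : ∀ t, polyGauge hq H h (e (t + 1)) ≤ lambar * polyGauge hq H h (e t) + c := by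
    intro t
    obtain ⟨P, hP, hPH, hPh⟩ := hdual t
    calc polyGauge hq H h (e (t + 1))
        ≤ polyGauge hq H h (M t *ᵥ e t) + polyGauge hq H h (w t) :=
          hdyn t ▸ polyGauge_add_le hq hh _ _
      _ ≤ lam t * polyGauge hq H h (e t) + c :=
          add_le_add (polyGauge_mulVec_le hq hh hP hPH hPh (hV _)) (hw t)
      _ ≤ lambar * polyGauge hq H h (e t) + c := by gcongr; exacts [hV _, hle t]
  intro t
  have hbound := le_pow_mul_add_of_le_mul_add (v := fun t => polyGauge hq H h (e t))
    hlambar.1.le hlambar.2.ne hstep t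
  refine ⟨hbound, hbound.trans ?_⟩
  have : 0 < 1 - lambar := sub_pos.mpr hlambar.2
  gcongr
  exact mul_le_of_le_one_right hc (sub_le_self _ (pow_nonneg hlambar.1.le t))

/-- disturbance case of Theorem 3: along the perturbed switched
closed-loop error dynamics `e(t+1) = M(t)·e(t) + w(t)` with `V(w(t)) ≤ c`,
the polyhedral Lyapunov function converges exponentially to the bounded set
`{e : V(e) ≤ c/(1−λ̄)}`. -/
theorem stmt_7 (q n : ℕ) (hq : 1 ≤ q) (hn : 1 ≤ n)
    (H : Matrix (Fin q) (Fin n) ℝ) (h : Fin q → ℝ) (hh : ∀ j, 0 < h j)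
    (hbdd : Bornology.IsBounded {e : Fin n → ℝ | ∀ j, H.mulVec e j ≤ h j})
    (M : ℕ → Matrix (Fin n) (Fin n) ℝ) (lam : ℕ → ℝ)
    (hlam : ∀ t, 0 < lam t ∧ lam t < 1)
    (hdual : ∀ t, ∃ P : Matrix (Fin q) (Fin q) ℝ,
      (∀ i j, 0 ≤ P i j) ∧ P * H = H * (M t) ∧ ∀ j, P.mulVec h j ≤ lam t * h j)
    (lambar : ℝ) (hlambar : 0 < lambar ∧ lambar < 1)
    (hle : ∀ t, lam t ≤ lambar)
    (w : ℕ → Fin n → ℝ) (c : ℝ) (hc : 0 ≤ c)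
    (hw : ∀ t, polyGauge hq H h (w t) ≤ c)
    (e : ℕ → Fin n → ℝ)
    (hdyn : ∀ t, e (t + 1) = (M t).mulVec (e t) + w t) :
    ∀ t : ℕ,
      polyGauge hq H h (e t) ≤
        lambar ^ t * polyGauge hq H h (e 0) + c * (1 - lambar ^ t) / (1 - lambar) ∧
      polyGauge hq H h (e t) ≤
        lambar ^ t * polyGauge hq H h (e 0) + c / (1 - lambar) :=
  stmt_7_general q n hq H h hh hbdd M lam hdual lambar hlambar hle w c hc hw e hdyn
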